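/- Every 2-dimensional real subspace v of ℂ² on whose unit sphere the stabilizer {u ∈ U(2) : u(v) = v} acts transitively has constant Kähler angle; moreover, up to the action of U(2), v = span_ℝ{(1,0), (i·cos φ, i·sin φ)} for some φ ∈ [0, π/2], with respect to a unitary basis of ℂ². -/

import Mathlib

open scoped ComplexConjugate

namespace KaehlerAux

noncomputable abbrev E := EuclideanSpace ℂ (Fin 2)

lemma inner_re' (x y : E) : (inner ℝ x y : ℝ) = (inner ℂ x y : ℂ).re := by
  simp [PiLp.inner_apply, RCLike.inner_apply, Complex.inner, Complex.re_sum]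

lemma innerE_sum (x y : E) : (inner ℂ x y : ℂ) = conj (x 0) * y 0 + conj (x 1) * y 1 := by
  simp [PiLp.inner_apply, RCLike.inner_apply, Fin.sum_univ_two]; ring

lemma rsmul (r : ℝ) (x : E) : r • x = (r : ℂ) • x := (algebraMap_smul ℂ r x).symm

lemma re_of (x y b0 : ℝ) : (((x:ℝ):ℂ) + Complex.I * ((y:ℝ):ℂ) * ((b0:ℝ):ℂ)).re = x := by simp

lemma re_smulI (x y b0 : ℝ) :
    ((starRingEnd ℂ) Complex.I * (((x:ℝ):ℂ) + Complex.I * ((y:ℝ):ℂ) * ((b0:ℝ):ℂ))).re = y * b0 := by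
  simp [Complex.mul_re, Complex.mul_im]

lemma expand (e f : E) (a b c d b0 : ℝ)
    (h1 : (inner ℂ e e : ℂ) = 1) (h2 : (inner ℂ f f : ℂ) = 1)
    (h3 : (inner ℂ e f : ℂ) = Complex.I * b0) :
    (inner ℂ (a • e + b • f) (c • e + d • f) : ℂ)
      = ((a*c + b*d : ℝ) : ℂ) + Complex.I * ((a*d - b*c : ℝ) : ℂ) * b0 := by
  have h4 : (inner ℂ f e : ℂ) = -(Complex.I * b0) := by
    rw [← inner_conj_symm, h3]
    simp [map_mul, Complex.conj_ofReal]
  rw [rsmul a, rsmul b, rsmul c, rsmul d]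
  simp only [inner_add_left, inner_add_right, inner_smul_left, inner_smul_right,
    Complex.conj_ofReal, h1, h2, h3, h4]
  push_cast
  ring

end KaehlerAux

set_option maxHeartbeats 2000000 in
open KaehlerAux in
/-- Every 2-dimensional real subspace `v` of `ℂ²` on whose unit sphere the stabilizer of `v`
in `U(2)` acts transitively has constant Kähler angle: the quantity `|Re⟪i·w, w'⟫|` is the same
for all orthonormal pairs `(w, w')` in `v` (this quantity is the cosine of the Kähler angle,
i.e. the norm of the projection of `i·w` onto `v`).  Moreover, up to the action of `U(2)`,
`v = span_ℝ {(1,0), (i cos φ, i sin φ)}` for some `φ ∈ [0, π/2]`. -/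
theorem transitive_stabilizer_constant_kaehler_angle
    (v : Submodule ℝ (EuclideanSpace ℂ (Fin 2)))
    (hdim : Module.finrank ℝ v = 2)
    (htrans : ∀ w ∈ v, ∀ w' ∈ v, ‖w‖ = 1 → ‖w'‖ = 1 →
      ∃ U ∈ Matrix.unitaryGroup (Fin 2) ℂ,
        Submodule.map ((Matrix.toEuclideanLin U).restrictScalars ℝ) v = v ∧
        Matrix.toEuclideanLin U w = w') :
    (∃ c : ℝ, ∀ w ∈ v, ∀ w' ∈ v, ‖w‖ = 1 → ‖w'‖ = 1 → (inner ℂ w w' : ℂ).re = 0 →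
        |(inner ℂ (Complex.I • w) w' : ℂ).re| = c) ∧
    (∃ φ ∈ Set.Icc (0 : ℝ) (Real.pi / 2), ∃ U ∈ Matrix.unitaryGroup (Fin 2) ℂ,
      Submodule.map ((Matrix.toEuclideanLin U).restrictScalars ℝ) v =
        Submodule.span ℝ
          {(WithLp.equiv 2 (Fin 2 → ℂ)).symm ![1, 0],
           (WithLp.equiv 2 (Fin 2 → ℂ)).symm
             ![Complex.I * (Real.cos φ : ℂ), Complex.I * (Real.sin φ : ℂ)]}) := by
  classical
  clear htrans
  haveI : FiniteDimensional ℝ v := inferInstance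
  let B : OrthonormalBasis (Fin 2) ℝ v := (stdOrthonormalBasis ℝ v).reindex (finCongr hdim)
  set e : E := (B 0 : E) with he_def
  set f0 : E := (B 1 : E) with hf0_def
  have he1 : ‖e‖ = 1 := by rw [he_def]; exact B.orthonormal.1 0
  have hf01 : ‖f0‖ = 1 := by rw [hf0_def]; exact B.orthonormal.1 1
  have hee : (inner ℂ e e : ℂ) = 1 := by
    rw [inner_self_eq_norm_sq_to_K, he1]; norm_num
  have hff : (inner ℂ f0 f0 : ℂ) = 1 := by
    rw [inner_self_eq_norm_sq_to_K, hf01]; norm_num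
  have hef : (inner ℂ e f0 : ℂ).re = 0 := by
    have h : (inner ℝ (B 0) (B 1) : ℝ) = 0 := B.orthonormal.2 (by decide : (0:Fin 2) ≠ 1)
    rw [Submodule.coe_inner, inner_re'] at h
    exact h
  have hcoord : ∀ w ∈ v, ∃ a b : ℝ, w = a • e + b • f0 := by
    intro w hw
    have h := B.sum_repr ⟨w, hw⟩
    refine ⟨B.repr ⟨w, hw⟩ 0, B.repr ⟨w, hw⟩ 1, ?_⟩
    have h2 := congrArg (Submodule.subtype v) h
    rw [map_sum, Fin.sum_univ_two] at h2
    simp only [map_smul, Submodule.subtype_apply] at h2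
    exact h2.symm
  have hev : e ∈ v := (B 0).2
  have hf0v : f0 ∈ v := (B 1).2
  set b0 : ℝ := (inner ℂ e f0 : ℂ).im with hb0_def
  have hef' : (inner ℂ e f0 : ℂ) = Complex.I * b0 := by
    apply Complex.ext
    · rw [hef]
      simp only [Complex.mul_re, Complex.I_re, Complex.I_im, Complex.ofReal_re,
        Complex.ofReal_im]
      ring
    · simp only [Complex.mul_im, Complex.I_re, Complex.I_im, Complex.ofReal_re,
        Complex.ofReal_im, hb0_def]
      ring
  constructor
  · -- Part 1: constant Kähler angle
    refine ⟨|b0|, ?_⟩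
    intro w hw w' hw' hnw hnw' horth
    obtain ⟨a, b, rfl⟩ := hcoord w hw
    obtain ⟨c, d, rfl⟩ := hcoord w' hw'
    have E1 := expand e f0 a b c d b0 hee hff hef'
    have hn1 : a*a + b*b = 1 := by
      have hW : (inner ℂ (a • e + b • f0) (a • e + b • f0) : ℂ) = 1 := by
        rw [inner_self_eq_norm_sq_to_K, hnw]; norm_num
      rw [expand e f0 a b a b b0 hee hff hef'] at hW
      have h2 := congrArg Complex.re hW
      rw [re_of, Complex.one_re] at h2
      exact h2
    have hn2 : c*c + d*d = 1 := by
      have hW : (inner ℂ (c • e + d • f0) (c • e + d • f0) : ℂ) = 1 := by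
        rw [inner_self_eq_norm_sq_to_K, hnw']; norm_num
      rw [expand e f0 c d c d b0 hee hff hef'] at hW
      have h2 := congrArg Complex.re hW
      rw [re_of, Complex.one_re] at h2
      exact h2
    have hn3 : a*c + b*d = 0 := by
      rw [E1] at horth
      rwa [re_of] at horth
    have hre : (inner ℂ (Complex.I • (a • e + b • f0)) (c • e + d • f0) : ℂ).re
        = (a*d - b*c) * b0 := by
      rw [inner_smul_left, E1, re_smulI]
    rw [hre]
    have hdet : |a*d - b*c| = 1 := by
      have h : (a*d - b*c)^2 = 1 := by
        linear_combination (c*c + d*d) * hn1 + hn2 - (a*c + b*d) * hn3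
      nlinarith [abs_nonneg (a*d - b*c), sq_abs (a*d - b*c)]
    rw [abs_mul, hdet, one_mul]
  · -- Part 2: normal form
    have main : ∀ f : E, f ∈ v → (inner ℂ f f : ℂ) = 1 → ‖f‖ = 1 →
        ∀ b : ℝ, 0 ≤ b → (inner ℂ e f : ℂ) = Complex.I * b →
        (∀ w ∈ v, ∃ a c : ℝ, w = a • e + c • f) →
        (∃ φ ∈ Set.Icc (0 : ℝ) (Real.pi / 2), ∃ U ∈ Matrix.unitaryGroup (Fin 2) ℂ,
          Submodule.map ((Matrix.toEuclideanLin U).restrictScalars ℝ) v =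
            Submodule.span ℝ
              {(WithLp.equiv 2 (Fin 2 → ℂ)).symm ![1, 0],
               (WithLp.equiv 2 (Fin 2 → ℂ)).symm
                 ![Complex.I * (Real.cos φ : ℂ), Complex.I * (Real.sin φ : ℂ)]}) := by
      intro f hfv hff1 hf1 b hb heff hcrd
      have hfe : (inner ℂ f e : ℂ) = -(Complex.I * b) := by
        rw [← inner_conj_symm, heff]
        simp [map_mul, Complex.conj_ofReal]
      have hb1 : b ≤ 1 := by
        have h := norm_inner_le_norm (𝕜 := ℂ) e f
        rw [heff, he1, hf1] at h
        rw [norm_mul, Complex.norm_I, one_mul, Complex.norm_real] at h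
        calc b ≤ |b| := le_abs_self b
        _ ≤ 1 := by simpa using h
      set g0 : E := f - ((b : ℂ) * Complex.I) • e with hg0_def
      have heg0 : (inner ℂ e g0 : ℂ) = 0 := by
        rw [hg0_def, inner_sub_right, inner_smul_right, hee, heff]
        ring
      have hg0n : ‖g0‖^2 = 1 - b^2 := by
        have h : (inner ℂ g0 g0 : ℂ) = ((1 - b^2 : ℝ) : ℂ) := by
          rw [hg0_def]
          simp only [inner_sub_left, inner_sub_right, inner_smul_left, inner_smul_right,
            hee, hff1, heff, hfe, map_mul, Complex.conj_ofReal, Complex.conj_I]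
          push_cast
          linear_combination ((b:ℂ)^2) * Complex.I_sq
        rw [inner_self_eq_norm_sq_to_K] at h
        have h2 : ((‖g0‖^2 : ℝ) : ℂ) = ((1 - b^2 : ℝ) : ℂ) := by
          rw [Complex.ofReal_pow]
          exact h
        exact Complex.ofReal_injective h2
      set u2 : E := if g0 = 0 then
          (WithLp.equiv 2 (Fin 2 → ℂ)).symm ![-conj (e 1), conj (e 0)]
        else ((‖g0‖⁻¹ : ℝ) : ℂ) • g0 with hu2_def
      have hu2u2 : (inner ℂ u2 u2 : ℂ) = 1 := by
        by_cases hg : g0 = 0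
        · rw [hu2_def, if_pos hg, innerE_sum]
          simp only [WithLp.equiv_symm_apply, PiLp.toLp_apply, Matrix.cons_val_zero, Matrix.cons_val_one,
            Matrix.head_cons, map_neg, Complex.conj_conj]
          rw [innerE_sum] at hee
          linear_combination hee
        · rw [hu2_def, if_neg hg, inner_smul_left, inner_smul_right,
            inner_self_eq_norm_sq_to_K, Complex.conj_ofReal]
          have hne : ((‖g0‖ : ℝ) : ℂ) ≠ 0 := by
            simpa [norm_eq_zero] using hg
          push_cast
          field_simp
          simp [sq]
      have heu2 : (inner ℂ e u2 : ℂ) = 0 := by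
        by_cases hg : g0 = 0
        · rw [hu2_def, if_pos hg, innerE_sum]
          simp only [WithLp.equiv_symm_apply, PiLp.toLp_apply, Matrix.cons_val_zero, Matrix.cons_val_one,
            Matrix.head_cons]
          ring
        · rw [hu2_def, if_neg hg, inner_smul_right, heg0, mul_zero]
      have hfu : f = ((b : ℂ) * Complex.I) • e + ((‖g0‖ : ℝ) : ℂ) • u2 := by
        by_cases hg : g0 = 0
        · have hf_eq : f = ((b : ℂ) * Complex.I) • e := by
            have h0 : f - ((b : ℂ) * Complex.I) • e = 0 := by rw [← hg0_def]; exact hg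
            exact (sub_eq_zero.mp h0)
          rw [hf_eq, hg]
          simp
        · rw [hu2_def, if_neg hg, smul_smul]
          have hne : ((‖g0‖ : ℝ) : ℂ) ≠ 0 := by simpa [norm_eq_zero] using hg
          have : ((‖g0‖ : ℝ) : ℂ) * ((‖g0‖⁻¹ : ℝ) : ℂ) = 1 := by
            push_cast; exact mul_inv_cancel₀ hne
          rw [this, one_smul, hg0_def]
          abel
      -- component facts
      have He : conj (e 0) * e 0 + conj (e 1) * e 1 = 1 := by
        rw [← innerE_sum]; exact hee
      have Hu : conj (u2 0) * u2 0 + conj (u2 1) * u2 1 = 1 := by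
        rw [← innerE_sum]; exact hu2u2
      have Heu : conj (e 0) * u2 0 + conj (e 1) * u2 1 = 0 := by
        rw [← innerE_sum]; exact heu2
      have hu2e : (inner ℂ u2 e : ℂ) = 0 := by
        rw [← inner_conj_symm, heu2, map_zero]
      have Hue : conj (u2 0) * e 0 + conj (u2 1) * e 1 = 0 := by
        rw [← innerE_sum]; exact hu2e
      -- the unitary matrix
      set M : Matrix (Fin 2) (Fin 2) ℂ :=
        Matrix.of ![![conj (e 0), conj (e 1)],
                    ![Complex.I * conj (u2 0), Complex.I * conj (u2 1)]] with hM_def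
      have hMun : M ∈ Matrix.unitaryGroup (Fin 2) ℂ := by
        rw [Matrix.mem_unitaryGroup_iff]
        ext i j
        fin_cases i <;> fin_cases j <;>
          simp only [hM_def, Matrix.mul_apply, Fin.sum_univ_two, Matrix.star_apply,
            Matrix.conjTranspose_apply, Matrix.of_apply, Matrix.cons_val', Matrix.cons_val_zero,
            Matrix.cons_val_one, Matrix.head_cons, Matrix.head_fin_const, Matrix.empty_val',
            Matrix.cons_val_fin_one, Matrix.one_apply_eq, Matrix.one_apply_ne, map_mul,
            Complex.conj_conj, Complex.conj_I, Matrix.one_apply, ne_eq, Fin.zero_eta,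
            Complex.star_def, Matrix.vecHead, Matrix.vecTail,
            Fin.mk_one, ite_true, ite_false, if_true, if_false]
        · linear_combination He
        · norm_num
          linear_combination (-Complex.I) * Heu
        · norm_num
          linear_combination Complex.I * Hue
        · linear_combination Hu - (conj (u2 0) * u2 0 + conj (u2 1) * u2 1) * Complex.I_sq
      -- action of M
      have happ : ∀ x : E, ∀ i, (Matrix.toEuclideanLin M x) i = M.mulVec x i := by
        intro x i
        rfl
      have hMe : Matrix.toEuclideanLin M e = (WithLp.equiv 2 (Fin 2 → ℂ)).symm ![1, 0] := by
        ext i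
        rw [happ]
        fin_cases i <;>
          simp only [hM_def, Matrix.mulVec, dotProduct, Fin.sum_univ_two,
            Matrix.of_apply, Matrix.cons_val', Matrix.cons_val_zero, Matrix.cons_val_one,
            Matrix.head_cons, WithLp.equiv_symm_apply, PiLp.toLp_apply, Fin.zero_eta, Fin.mk_one,
            Matrix.vecHead, Matrix.vecTail, Matrix.empty_val', Matrix.cons_val_fin_one]
        · exact He
        · linear_combination Complex.I * Hue
      have hMu2 : Matrix.toEuclideanLin M u2
          = (WithLp.equiv 2 (Fin 2 → ℂ)).symm ![0, Complex.I] := by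
        ext i
        rw [happ]
        fin_cases i <;>
          simp only [hM_def, Matrix.mulVec, dotProduct, Fin.sum_univ_two,
            Matrix.of_apply, Matrix.cons_val', Matrix.cons_val_zero, Matrix.cons_val_one,
            Matrix.head_cons, WithLp.equiv_symm_apply, PiLp.toLp_apply, Fin.zero_eta, Fin.mk_one,
            Matrix.vecHead, Matrix.vecTail, Matrix.empty_val', Matrix.cons_val_fin_one]
        · exact Heu
        · linear_combination Complex.I * Hu
      -- the angle
      have hb1' : -1 ≤ b := by linarith
      refine ⟨Real.arccos b, ⟨Real.arccos_nonneg b, (Real.arccos_le_pi_div_two).2 hb⟩,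
        M, hMun, ?_⟩
      have hcos : Real.cos (Real.arccos b) = b := Real.cos_arccos hb1' hb1
      have hsin : Real.sin (Real.arccos b) = ‖g0‖ := by
        rw [Real.sin_arccos, ← hg0n]
        exact Real.sqrt_sq (norm_nonneg g0)
      have hMf : Matrix.toEuclideanLin M f
          = (WithLp.equiv 2 (Fin 2 → ℂ)).symm
              ![Complex.I * (Real.cos (Real.arccos b) : ℂ),
                Complex.I * (Real.sin (Real.arccos b) : ℂ)] := by
        rw [hcos, hsin, hfu, map_add, map_smul, map_smul, hMe, hMu2]
        ext i
        fin_cases i <;>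
          simp only [PiLp.add_apply, PiLp.smul_apply, WithLp.equiv_symm_apply, PiLp.toLp_apply,
            Matrix.cons_val_zero, Matrix.cons_val_one, Matrix.head_cons, smul_eq_mul,
            Fin.zero_eta, Fin.mk_one] <;> ring
      apply le_antisymm
      · intro x hx
        obtain ⟨w, hw, rfl⟩ := hx
        obtain ⟨a, c, rfl⟩ := hcrd w hw
        rw [LinearMap.restrictScalars_apply, map_add, LinearMap.map_smul_of_tower,
          LinearMap.map_smul_of_tower, hMe, hMf]
        exact Submodule.add_mem _
          (Submodule.smul_mem _ _ (Submodule.subset_span (by left; rfl)))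
          (Submodule.smul_mem _ _ (Submodule.subset_span (by right; rfl)))
      · rw [Submodule.span_le]
        rintro x (rfl | rfl)
        · exact ⟨e, hev, hMe⟩
        · exact ⟨f, hfv, hMf⟩

    rcases le_or_gt 0 b0 with hsgn | hsgn
    · exact main f0 hf0v hff hf01 b0 hsgn hef' hcoord
    · refine main (-f0) (neg_mem hf0v) (by rw [inner_neg_left, inner_neg_right, neg_neg, hff]) (by simp [hf01]) (-b0)
        (by linarith) (by rw [inner_neg_right, hef']; push_cast; ring) ?_
      intro w hw
      obtain ⟨a, c, rfl⟩ := hcoord w hw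
      exact ⟨a, -c, by simp⟩
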